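/- arXiv:math/0209315 — 3 statements merged into one kernel-verified Lean document; each statement's English description precedes it below -/
import Mathlib

section
/- Let F be a finite field with q elements. The number of nonzero alternating 6×6 matrices A over F with rank A ≤ 2 equals (q⁵−1)(q⁴+q²+1). -/
open Matrix Module Submodule

namespace Stmt2

variable {F : Type*} [Field F]

/-- The rank-two alternating matrix `c • (w ⊗ v - v ⊗ w)`. -/
def canon (c : F) (v w : Fin 6 → F) : Matrix (Fin 6) (Fin 6) F :=
  Matrix.of fun k l => c * (w k * v l - v k * w l)

lemma canon_apply (c : F) (v w : Fin 6 → F) (k l : Fin 6) :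
    canon c v w k l = c * (w k * v l - v k * w l) := rfl

lemma canon_transpose (c : F) (v w : Fin 6 → F) : (canon c v w)ᵀ = -canon c v w := by
  ext k l; simp [canon_apply, transpose_apply]; ring

lemma canon_rank (c : F) (v w : Fin 6 → F) : (canon c v w).rank ≤ 2 := by
  classical
  have h1 : (canon c v w).rank = finrank F (LinearMap.range (canon c v w).mulVecLin) := rfl
  rw [h1, Matrix.range_mulVecLin]
  have hsub : Set.range (canon c v w)ᵀ ⊆ (span F {v, w} : Submodule F (Fin 6 → F)) := by
    rintro - ⟨l, rfl⟩
    have : (canon c v w)ᵀ l = (c * v l) • w - (c * w l) • v := by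
      funext k; simp [canon_apply, transpose_apply]; ring
    rw [this]
    exact sub_mem (smul_mem _ _ (subset_span (by simp))) (smul_mem _ _ (subset_span (by simp)))
  have hle : span F (Set.range (canon c v w)ᵀ) ≤ span F {v, w} := span_le.mpr hsub
  refine (Submodule.finrank_mono hle).trans ?_
  refine (finrank_span_le_card _).trans ?_
  calc ({v, w} : Set (Fin 6 → F)).toFinset.card ≤ ({w} : Set (Fin 6 → F)).toFinset.card + 1 := by
        simp only [Set.toFinset_insert]
        exact Finset.card_insert_le _ _
    _ ≤ 2 := by simp

lemma skew {A : Matrix (Fin 6) (Fin 6) F} (h : Aᵀ = -A) (k l : Fin 6) : A l k = - A k l := by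
  have := congrFun (congrFun h k) l
  simpa [transpose_apply] using this

lemma plucker {A : Matrix (Fin 6) (Fin 6) F} (hA : Aᵀ = -A) (hd : ∀ i, A i i = 0)
    (hr : A.rank ≤ 2) {i j : Fin 6} (hc : A i j ≠ 0) (k l : Fin 6) :
    A i j * A k l = A i l * A k j - A j l * A k i := by
  have hdep : ¬ LinearIndependent F ![Aᵀ i, Aᵀ j, Aᵀ l] := by
    intro h
    have h3 : finrank F (span F (Set.range ![Aᵀ i, Aᵀ j, Aᵀ l])) = 3 := by
      rw [finrank_span_eq_card h]; simp
    have hle : span F (Set.range ![Aᵀ i, Aᵀ j, Aᵀ l]) ≤ span F (Set.range Aᵀ) := by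
      apply span_mono; rintro - ⟨m, rfl⟩; fin_cases m <;> exact ⟨_, rfl⟩
    have h2 : finrank F (span F (Set.range Aᵀ)) ≤ 2 := by
      have hx : A.rank = finrank F (LinearMap.range A.mulVecLin) := rfl
      rw [hx, Matrix.range_mulVecLin] at hr; exact hr
    have := (Submodule.finrank_mono hle).trans h2
    omega
  rw [Fintype.not_linearIndependent_iff] at hdep
  obtain ⟨g, hg, m, hm⟩ := hdep
  have hsum : g 0 • Aᵀ i + g 1 • Aᵀ j + g 2 • Aᵀ l = 0 := by
    simpa [Fin.sum_univ_three] using hg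
  have e : ∀ b, g 0 * A b i + g 1 * A b j + g 2 * A b l = 0 := by
    intro b
    have := congrFun hsum b
    simpa [transpose_apply] using this
  have hi := e i
  rw [hd i] at hi
  have hj := e j
  rw [hd j, skew hA i j] at hj
  have hk := e k
  by_cases hg2 : g 2 = 0
  · rw [hg2] at hi hj
    have hg1 : g 1 = 0 := by
      have : g 1 * A i j = 0 := by linear_combination hi
      exact (mul_eq_zero.mp this).resolve_right hc
    have hg0 : g 0 = 0 := by
      have : g 0 * A i j = 0 := by linear_combination -hj
      exact (mul_eq_zero.mp this).resolve_right hc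
    fin_cases m <;> simp_all
  · have key : g 2 * (A i j * A k l) = g 2 * (A i l * A k j - A j l * A k i) := by
      linear_combination A i j * hk - A k j * hi + A k i * hj
    exact mul_left_cancel₀ hg2 key

def Cond (p : Fin 6 × Fin 6) (y : F × (Fin 6 → F) × (Fin 6 → F)) : Prop :=
  p.1 < p.2 ∧ y.1 ≠ 0 ∧ y.2.1 p.2 = 1 ∧ (∀ k < p.2, y.2.1 k = 0) ∧
    y.2.2 p.1 = 1 ∧ y.2.2 p.2 = 0 ∧ (∀ k < p.1, y.2.2 k = 0)

lemma canon_pivot {i j : Fin 6} {c : F} {v w : Fin 6 → F} (h : Cond (i, j) (c, v, w)) :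
    canon c v w i j = c := by
  obtain ⟨hij, hc, hvj, hv, hwi, hwj, hw⟩ := h
  dsimp only at hij hc hvj hv hwi hwj hw
  rw [canon_apply, hvj, hwi, hv i hij]
  ring

lemma canon_row {i j : Fin 6} {c : F} {v w : Fin 6 → F} (h : Cond (i, j) (c, v, w)) (l : Fin 6) :
    canon c v w i l = c * v l := by
  obtain ⟨hij, hc, hvj, hv, hwi, hwj, hw⟩ := h
  dsimp only at hij hc hvj hv hwi hwj hw
  rw [canon_apply, hwi, hv i hij]
  ring

lemma canon_col {i j : Fin 6} {c : F} {v w : Fin 6 → F} (h : Cond (i, j) (c, v, w)) (k : Fin 6) :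
    canon c v w k j = c * w k := by
  obtain ⟨hij, hc, hvj, hv, hwi, hwj, hw⟩ := h
  dsimp only at hij hc hvj hv hwi hwj hw
  rw [canon_apply, hvj, hwj]
  ring

lemma canon_lowrow {i j : Fin 6} {c : F} {v w : Fin 6 → F} (h : Cond (i, j) (c, v, w))
    {k : Fin 6} (hk : k < i) (l : Fin 6) : canon c v w k l = 0 := by
  obtain ⟨hij, hc, hvj, hv, hwi, hwj, hw⟩ := h
  dsimp only at hij hc hvj hv hwi hwj hw
  rw [canon_apply, hw k hk, hv k (hk.trans hij)]
  ring

lemma canon_ne_zero {i j : Fin 6} {c : F} {v w : Fin 6 → F} (h : Cond (i, j) (c, v, w)) :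
    canon c v w ≠ 0 := by
  intro h0
  have := canon_pivot h
  rw [h0] at this
  rw [Matrix.zero_apply] at this
  exact h.2.1 this.symm

lemma canon_diag (c : F) (v w : Fin 6 → F) (k : Fin 6) : canon c v w k k = 0 := by
  rw [canon_apply]; ring

lemma inj_aux {i1 j1 i2 j2 : Fin 6} {c1 v1 w1 c2 v2 w2 : _}
    (h1 : Cond (i1, j1) ((c1 : F), v1, w1)) (h2 : Cond (i2, j2) (c2, v2, w2))
    (heq : canon c1 v1 w1 = canon c2 v2 w2) : ¬ i2 < i1 := by
  intro hlt
  have e1 : canon c1 v1 w1 i2 j2 = 0 := canon_lowrow h1 hlt j2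
  have e2 : canon c2 v2 w2 i2 j2 = c2 := canon_pivot h2
  rw [heq, e2] at e1
  exact h2.2.1 e1

lemma inj_aux2 {i j1 j2 : Fin 6} {c1 v1 w1 c2 v2 w2 : _}
    (h1 : Cond (i, j1) ((c1 : F), v1, w1)) (h2 : Cond (i, j2) (c2, v2, w2))
    (heq : canon c1 v1 w1 = canon c2 v2 w2) : ¬ j2 < j1 := by
  intro hlt
  have e1 : canon c1 v1 w1 i j2 = c1 * v1 j2 := canon_row h1 j2
  have e2 : canon c2 v2 w2 i j2 = c2 := canon_pivot h2
  rw [heq, e2] at e1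
  have hz : v1 j2 = 0 := h1.2.2.2.1 j2 hlt
  rw [hz, mul_zero] at e1
  exact h2.2.1 e1

lemma phi_injective {x1 x2 : (Fin 6 × Fin 6) × F × (Fin 6 → F) × (Fin 6 → F)}
    (h1 : Cond x1.1 x1.2) (h2 : Cond x2.1 x2.2)
    (heq : canon x1.2.1 x1.2.2.1 x1.2.2.2 = canon x2.2.1 x2.2.2.1 x2.2.2.2) : x1 = x2 := by
  obtain ⟨⟨i1, j1⟩, c1, v1, w1⟩ := x1
  obtain ⟨⟨i2, j2⟩, c2, v2, w2⟩ := x2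
  dsimp only at h1 h2 heq
  have hi : i1 = i2 := le_antisymm (not_lt.mp (inj_aux h1 h2 heq)) (not_lt.mp (inj_aux h2 h1 heq.symm))
  subst hi
  have hj : j1 = j2 := le_antisymm (not_lt.mp (inj_aux2 h1 h2 heq)) (not_lt.mp (inj_aux2 h2 h1 heq.symm))
  subst hj
  have hc : c1 = c2 := by
    have := canon_pivot h1
    rw [heq, canon_pivot h2] at this
    exact this.symm
  subst hc
  have hv : v1 = v2 := by
    funext l
    have := canon_row h1 l
    rw [heq, canon_row h2 l] at this
    exact mul_left_cancel₀ h1.2.1 this.symm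
  have hw : w1 = w2 := by
    funext k
    have := canon_col h1 k
    rw [heq, canon_col h2 k] at this
    exact mul_left_cancel₀ h1.2.1 this.symm
  rw [hv, hw]

lemma phi_surjective {A : Matrix (Fin 6) (Fin 6) F} (hA : Aᵀ = -A) (hd : ∀ i, A i i = 0)
    (hne : A ≠ 0) (hr : A.rank ≤ 2) :
    ∃ x : (Fin 6 × Fin 6) × F × (Fin 6 → F) × (Fin 6 → F),
      Cond x.1 x.2 ∧ canon x.2.1 x.2.2.1 x.2.2.2 = A := by
  classical
  have hex : ∃ k l, A k l ≠ 0 := by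
    by_contra h
    push_neg at h
    exact hne (by ext k l; exact h k l)
  obtain ⟨k0, l0, hk0⟩ := hex
  set s : Finset (Fin 6) := Finset.univ.filter (fun k => ∃ l, A k l ≠ 0) with hs
  have hsne : s.Nonempty := ⟨k0, by simp [hs]; exact ⟨l0, hk0⟩⟩
  obtain ⟨i, his, hmin⟩ := Finset.exists_min_image s id hsne
  have hrow0 : ∀ k, k < i → ∀ l, A k l = 0 := by
    intro k hk l
    by_contra h
    have : k ∈ s := by simp [hs]; exact ⟨l, h⟩
    exact absurd (hmin k this) (by simpa using hk)
  have hirow : ∃ l, A i l ≠ 0 := by simpa [hs] using his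
  set t : Finset (Fin 6) := Finset.univ.filter (fun l => A i l ≠ 0) with ht
  have htne : t.Nonempty := by obtain ⟨l, hl⟩ := hirow; exact ⟨l, by simp [ht, hl]⟩
  obtain ⟨j, hjt, hjmin⟩ := Finset.exists_min_image t id htne
  have hc : A i j ≠ 0 := by simpa [ht] using hjt
  have hjmin' : ∀ l, l < j → A i l = 0 := by
    intro l hl
    by_contra h
    have : l ∈ t := by simp [ht, h]
    exact absurd (hjmin l this) (by simpa using hl)
  have hij : i < j := by
    rcases lt_trichotomy i j with h | h | h
    · exact h
    · exact absurd (h ▸ hd i) hc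
    · exact absurd ((skew hA j i).trans (by rw [hrow0 j h i, neg_zero])) hc
  refine ⟨⟨(i, j), A i j, fun l => (A i j)⁻¹ * A i l, fun k => (A i j)⁻¹ * A k j⟩,
    ⟨hij, hc, ?_, ?_, ?_, ?_, ?_⟩, ?_⟩
  · exact inv_mul_cancel₀ hc
  · intro k hk; dsimp only; rw [hjmin' k hk, mul_zero]
  · exact inv_mul_cancel₀ hc
  · dsimp only; rw [hd j, mul_zero]
  · intro k hk; dsimp only; rw [hrow0 k hk j, mul_zero]
  · ext k l
    rw [canon_apply]
    dsimp only
    have hp := plucker hA hd hr hc k l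
    have s1 : A l j = - A j l := skew hA j l
    have s2 : A i k = - A k i := skew hA k i
    rw [s1, s2]
    have h2 : (A i j)⁻¹ * A i j = 1 := inv_mul_cancel₀ hc
    linear_combination (-((A i j)⁻¹ * (A i j)⁻¹ * A i j)) * hp +
      (A k l * ((A i j)⁻¹ * A i j + 1)) * h2

variable [Fintype F]

def vEquiv (j : Fin 6) : {v : Fin 6 → F // v j = 1 ∧ ∀ k < j, v k = 0} ≃
    ({k : Fin 6 // j < k} → F) where
  toFun v k := v.1 k.1
  invFun a := ⟨fun k => if h : j < k then a ⟨k, h⟩ else if k = j then 1 else 0, by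
    constructor
    · simp
    · intro k hk
      simp [not_lt_of_gt hk, hk.ne]⟩
  left_inv v := by
    obtain ⟨v, hv1, hv2⟩ := v
    ext k
    dsimp only
    rcases lt_trichotomy j k with h | h | h
    · simp [h]
    · subst h; simp [hv1]
    · simp [not_lt_of_gt h, (ne_of_lt h), hv2 k h]
  right_inv a := by
    ext k
    simp [k.2]

def wEquiv {i j : Fin 6} (hij : i < j) :
    {w : Fin 6 → F // w i = 1 ∧ w j = 0 ∧ ∀ k < i, w k = 0} ≃
    ({k : Fin 6 // i < k ∧ k ≠ j} → F) where
  toFun w k := w.1 k.1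
  invFun a := ⟨fun k => if h : i < k ∧ k ≠ j then a ⟨k, h⟩ else if k = i then 1 else 0, by
    refine ⟨by simp, ?_, ?_⟩
    · have : ¬ (i < j ∧ j ≠ j) := by simp
      simp [this, (hij.ne).symm]
    · intro k hk
      have : ¬ (i < k ∧ k ≠ j) := by simp [not_lt_of_gt hk]
      simp [this, (ne_of_lt hk)]⟩
  left_inv w := by
    obtain ⟨w, hw1, hw2, hw3⟩ := w
    ext k
    dsimp only
    by_cases h : i < k ∧ k ≠ j
    · simp [h]
    · rw [dif_neg h]
      push_neg at h
      by_cases hk : k = i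
      · simp [hk, hw1]
      · rw [if_neg hk]
        rcases lt_or_ge i k with h' | h'
        · rw [h h', hw2]
        · exact (hw3 k (lt_of_le_of_ne h' hk)).symm
  right_inv a := by
    ext k
    simp [k.2.1, k.2.2]

lemma card_vsub (j : Fin 6) (q : ℕ) (hq : Fintype.card F = q) :
    Nat.card {v : Fin 6 → F // v j = 1 ∧ ∀ k < j, v k = 0} = q ^ (5 - (j : ℕ)) := by
  rw [Nat.card_congr (vEquiv j), Nat.card_fun]
  congr 1
  · rw [Nat.card_eq_fintype_card, hq]
  · rw [Nat.card_eq_fintype_card]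
    revert j
    decide

lemma card_wsub {i j : Fin 6} (hij : i < j) (q : ℕ) (hq : Fintype.card F = q) :
    Nat.card {w : Fin 6 → F // w i = 1 ∧ w j = 0 ∧ ∀ k < i, w k = 0} = q ^ (4 - (i : ℕ)) := by
  rw [Nat.card_congr (wEquiv hij), Nat.card_fun]
  congr 1
  · rw [Nat.card_eq_fintype_card, hq]
  · rw [Nat.card_eq_fintype_card]
    revert hij
    revert i j
    decide

lemma card_slice (p : Fin 6 × Fin 6) (q : ℕ) (hq : Fintype.card F = q) :
    Nat.card {y : F × (Fin 6 → F) × (Fin 6 → F) // Cond p y} =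
      if p.1 < p.2 then (q - 1) * (q ^ (5 - (p.2 : ℕ)) * q ^ (4 - (p.1 : ℕ))) else 0 := by
  obtain ⟨i, j⟩ := p
  by_cases hij : i < j
  · rw [if_pos hij]
    have e1 : {y : F × (Fin 6 → F) × (Fin 6 → F) // Cond (i, j) y} ≃
        {y : F × (Fin 6 → F) × (Fin 6 → F) // y.1 ≠ 0 ∧
          ((y.2.1 j = 1 ∧ ∀ k < j, y.2.1 k = 0) ∧
           (y.2.2 i = 1 ∧ y.2.2 j = 0 ∧ ∀ k < i, y.2.2 k = 0))} :=
      Equiv.subtypeEquivRight (by intro y; unfold Cond; dsimp only; tauto)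
    have e2 := Equiv.subtypeProdEquivProd
      (p := fun c : F => c ≠ 0)
      (q := fun z : (Fin 6 → F) × (Fin 6 → F) =>
        (z.1 j = 1 ∧ ∀ k < j, z.1 k = 0) ∧ (z.2 i = 1 ∧ z.2 j = 0 ∧ ∀ k < i, z.2 k = 0))
    have e3 := Equiv.subtypeProdEquivProd
      (p := fun v : Fin 6 → F => v j = 1 ∧ ∀ k < j, v k = 0)
      (q := fun w : Fin 6 → F => w i = 1 ∧ w j = 0 ∧ ∀ k < i, w k = 0)
    rw [Nat.card_congr (((e1.trans e2).trans (Equiv.prodCongr (Equiv.refl _) e3)))]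
    rw [Nat.card_prod, Nat.card_prod]
    rw [Nat.card_congr (unitsEquivNeZero).symm, Nat.card_units, Nat.card_eq_fintype_card, hq]
    rw [card_vsub j q hq, card_wsub hij q hq]
  · rw [if_neg hij]
    have : IsEmpty {y : F × (Fin 6 → F) × (Fin 6 → F) // Cond (i, j) y} := by
      constructor
      rintro ⟨y, hy⟩
      exact hij hy.1
    exact Nat.card_of_isEmpty

end Stmt2

open Matrix Stmt2

/-- The number of nonzero alternating 6×6 matrices of rank at most 2 over a finite field
with `q` elements equals `(q⁵−1)(q⁴+q²+1)`. -/
theorem stmt_2 (F : Type*) [Field F] [Fintype F] (q : ℕ) (hq : Fintype.card F = q) :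
    Nat.card {A : Matrix (Fin 6) (Fin 6) F //
      Aᵀ = -A ∧ (∀ i, A i i = 0) ∧ A ≠ 0 ∧ A.rank ≤ 2} =
    (q ^ 5 - 1) * (q ^ 4 + q ^ 2 + 1) := by
  classical
  have key : Nat.card {A : Matrix (Fin 6) (Fin 6) F //
      Aᵀ = -A ∧ (∀ i, A i i = 0) ∧ A ≠ 0 ∧ A.rank ≤ 2} =
      Nat.card {x : (Fin 6 × Fin 6) × F × (Fin 6 → F) × (Fin 6 → F) // Cond x.1 x.2} := by
    symm
    apply Nat.card_eq_of_bijective (fun x =>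
      (⟨canon x.1.2.1 x.1.2.2.1 x.1.2.2.2,
        canon_transpose _ _ _, canon_diag _ _ _,
        (by obtain ⟨⟨⟨i, j⟩, c, v, w⟩, hx⟩ := x; exact canon_ne_zero hx),
        canon_rank _ _ _⟩ : {A : Matrix (Fin 6) (Fin 6) F //
          Aᵀ = -A ∧ (∀ i, A i i = 0) ∧ A ≠ 0 ∧ A.rank ≤ 2}))
    constructor
    · intro x1 x2 h
      exact Subtype.ext (phi_injective x1.2 x2.2 (congrArg Subtype.val h))
    · rintro ⟨A, hA, hd, hne, hr⟩
      obtain ⟨x, hx, hcan⟩ := phi_surjective hA hd hne hr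
      exact ⟨⟨x, hx⟩, Subtype.ext hcan⟩
  rw [key, Nat.card_congr (Equiv.subtypeProdEquivSigmaSubtype
    (fun (p : Fin 6 × Fin 6) (y : F × (Fin 6 → F) × (Fin 6 → F)) => Cond p y))]
  rw [Nat.card_eq_fintype_card, Fintype.card_sigma]
  have hsl : ∀ p : Fin 6 × Fin 6,
      Fintype.card {y : F × (Fin 6 → F) × (Fin 6 → F) // Cond p y} =
      if p.1 < p.2 then (q - 1) * (q ^ (5 - (p.2 : ℕ)) * q ^ (4 - (p.1 : ℕ))) else 0 := by
    intro p
    rw [← Nat.card_eq_fintype_card]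
    exact card_slice p q hq
  rw [Finset.sum_congr rfl (fun p _ => hsl p)]
  have hq2 : 2 ≤ q := hq ▸ Fintype.one_lt_card
  rw [Fintype.sum_prod_type]
  simp only [Fin.sum_univ_six]
  simp only [Fin.lt_def, show ((0:Fin 6):ℕ)=0 from rfl, show ((1:Fin 6):ℕ)=1 from rfl,
    show ((2:Fin 6):ℕ)=2 from rfl, show ((3:Fin 6):ℕ)=3 from rfl,
    show ((4:Fin 6):ℕ)=4 from rfl, show ((5:Fin 6):ℕ)=5 from rfl]
  norm_num
  have h1 : 1 ≤ q := le_trans one_le_two hq2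
  have h5 : 1 ≤ q ^ 5 := Nat.one_le_pow _ _ (lt_of_lt_of_le Nat.zero_lt_two hq2)
  zify [h1, h5]
  ring
end

section
/- Let F be a finite field with q elements and let ψ be a nontrivial additive character of F with values in ℂ. Then the sum of ψ(det A) over all 3×3 matrices A with entries in F equals q⁷ + q⁶ − q⁴. -/
/-!
Scaling one row by `c⁻¹` shows that `det` takes every nonzero value equally often, namely
`|GL₃(F)| / (q - 1)` times. Grouping the sum by the value of `det`, the nonzero values then
contribute `|GL₃(F)| / (q - 1)` times `∑_{c ≠ 0} ψ c = -1`, and the value `0` contributes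
`q⁹ - |GL₃(F)|`; with `|GL₃(F)| = (q³ - 1)(q³ - q)(q³ - q²)` this is `q⁷ + q⁶ - q⁴`.
-/

open Finset

theorem AddChar.sum_erase_zero_eq_neg_one {F R : Type*} [Field F] [Fintype F] [DecidableEq F]
    [CommRing R] [IsDomain R] {ψ : AddChar F R} (hψ : ψ ≠ 1) :
    ∑ c ∈ univ.erase (0 : F), ψ c = -1 := by
  rw [eq_neg_iff_add_eq_zero, ← AddChar.map_zero_eq_one ψ, sum_erase_add _ _ (mem_univ _)]
  exact AddChar.sum_eq_zero_of_ne_one hψ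

section FiberCount

variable {F α : Type*} [Field F] [Fintype F] [DecidableEq F] [Fintype α] {f : α → F}

theorem card_filter_ne_zero_eq_card_sub_one_mul
    (hf : ∀ c ≠ 0, #{a | f a = c} = #{a | f a = 1}) :
    #{a | f a ≠ 0} = (Fintype.card F - 1) * #{a | f a = 1} := by
  have hmaps : ∀ a ∈ ({a | f a ≠ 0} : Finset α), f a ∈ univ.erase 0 := fun a ha =>
    mem_erase.mpr ⟨(mem_filter.mp ha).2, mem_univ _⟩
  rw [card_eq_sum_card_fiberwise hmaps, ← card_univ, ← card_erase_of_mem (mem_univ 0),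
    ← smul_eq_mul, ← sum_const]
  refine sum_congr rfl fun c hc => ?_
  rw [filter_filter, ← hf c (ne_of_mem_erase hc)]
  congr 1
  ext a
  simp only [mem_filter, mem_univ, true_and, and_iff_right_iff_imp]
  exact fun h => h ▸ ne_of_mem_erase hc

variable {R : Type*} [CommRing R] [IsDomain R]

theorem sum_addChar_comp_eq_of_card_fiber_eq {ψ : AddChar F R} (hψ : ψ ≠ 1)
    (hf : ∀ c ≠ 0, #{a | f a = c} = #{a | f a = 1}) :
    ∑ a, ψ (f a) = (#{a | f a = 0} : R) - #{a | f a = 1} := by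
  rw [← sum_fiberwise univ f (fun a => ψ (f a)), ← sum_erase_add _ _ (mem_univ 0)]
  have hconst : ∀ c ∈ univ.erase (0 : F), ∑ a ∈ {a | f a = c}, ψ (f a) =
      #{a | f a = 1} * ψ c := fun c hc => by
    rw [sum_congr rfl fun a ha => congrArg ψ (mem_filter.mp ha).2, sum_const,
      hf c (ne_of_mem_erase hc), nsmul_eq_mul]
  rw [sum_congr rfl hconst, ← mul_sum, AddChar.sum_erase_zero_eq_neg_one hψ,
    sum_congr rfl fun a ha => congrArg ψ (mem_filter.mp ha).2, sum_const,
    AddChar.map_zero_eq_one, nsmul_one]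
  ring

theorem mul_sum_addChar_comp_eq_of_card_fiber_eq {ψ : AddChar F R} (hψ : ψ ≠ 1)
    (hf : ∀ c ≠ 0, #{a | f a = c} = #{a | f a = 1}) :
    ((Fintype.card F : R) - 1) * ∑ a, ψ (f a) =
      ((Fintype.card F : R) - 1) * Fintype.card α - Fintype.card F * #{a | f a ≠ 0} := by
  have hcard : (#{a | f a = 0} : R) + #{a | f a ≠ 0} = Fintype.card α := by
    rw [← Nat.cast_add, card_filter_add_card_filter_not, card_univ]
  have hne : (#{a | f a ≠ 0} : R) = ((Fintype.card F : R) - 1) * #{a | f a = 1} := by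
    rw [card_filter_ne_zero_eq_card_sub_one_mul hf, Nat.cast_mul, Nat.cast_pred Fintype.card_pos]
  rw [sum_addChar_comp_eq_of_card_fiber_eq hψ hf]
  linear_combination ((Fintype.card F : R) - 1) * hcard + hne

end FiberCount

namespace Matrix

variable {F : Type*} [Field F] [Fintype F] [DecidableEq F]

theorem card_det_eq_of_ne_zero {n : Type*} [Fintype n] [DecidableEq n] [Nonempty n] {c : F}
    (hc : c ≠ 0) : #{A : Matrix n n F | A.det = c} = #{A : Matrix n n F | A.det = 1} := by
  obtain ⟨i⟩ := ‹Nonempty n›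
  refine card_nbij' (fun A => A.updateRow i (c⁻¹ • A i)) (fun A => A.updateRow i (c • A i))
    ?_ ?_ ?_ ?_
  · intro A hA
    simp only [coe_filter, Set.mem_ofPred_eq, mem_univ, true_and] at hA ⊢
    rw [det_updateRow_smul, updateRow_eq_self, hA, inv_mul_cancel₀ hc]
  · intro A hA
    simp only [coe_filter, Set.mem_ofPred_eq, mem_univ, true_and] at hA ⊢
    rw [det_updateRow_smul, updateRow_eq_self, hA, mul_one]
  · intro A _
    simp [smul_smul, mul_inv_cancel₀ hc]
  · intro A _
    simp [smul_smul, inv_mul_cancel₀ hc]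

theorem card_det_ne_zero (n : ℕ) :
    #{A : Matrix (Fin n) (Fin n) F | A.det ≠ 0} =
      ∏ i : Fin n, (Fintype.card F ^ n - Fintype.card F ^ (i : ℕ)) := by
  rw [← card_GL_field, Nat.card_eq_fintype_card, ← card_univ,
    ← card_map ⟨Units.val, Units.val_injective⟩]
  congr 1
  ext A
  simp only [mem_filter, mem_univ, true_and, mem_map, Function.Embedding.coeFn_mk,
    ← isUnit_iff_ne_zero, ← isUnit_iff_isUnit_det]
  rfl

theorem mul_sum_addChar_det {R : Type*} [CommRing R] [IsDomain R] {ψ : AddChar F R}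
    (hψ : ψ ≠ 1) (n : ℕ) [NeZero n] :
    ((Fintype.card F : R) - 1) * ∑ A : Matrix (Fin n) (Fin n) F, ψ A.det =
      ((Fintype.card F : R) - 1) * Fintype.card F ^ (n * n) -
        Fintype.card F *
          ∏ i : Fin n, ((Fintype.card F : R) ^ n - Fintype.card F ^ (i : ℕ)) := by
  have hcard : Fintype.card (Matrix (Fin n) (Fin n) F) = Fintype.card F ^ (n * n) := by
    rw [Fintype.card_congr of.symm, Fintype.card_fun, Fintype.card_fun, Fintype.card_fin, pow_mul']
  have hfactor (i : Fin n) : ((Fintype.card F ^ n - Fintype.card F ^ (i : ℕ) : ℕ) : R) =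
      (Fintype.card F : R) ^ n - Fintype.card F ^ (i : ℕ) := by
    rw [Nat.cast_sub (Nat.pow_le_pow_right Fintype.card_pos i.is_lt.le), Nat.cast_pow, Nat.cast_pow]
  rw [mul_sum_addChar_comp_eq_of_card_fiber_eq hψ fun _ => card_det_eq_of_ne_zero,
    card_det_ne_zero, hcard, Nat.cast_prod, Nat.cast_pow]
  simp only [hfactor]

end Matrix

/-- For a nontrivial additive character `ψ` of a finite field `F` with `q` elements,
the sum of `ψ(det A)` over all 3×3 matrices `A` over `F` equals `q⁷ + q⁶ − q⁴`. -/
theorem stmt_11 (F : Type*) [Field F] [Fintype F] (q : ℕ) (hq : Fintype.card F = q)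
    (ψ : AddChar F ℂ) (hψ : ∃ a : F, ψ a ≠ 1) :
    ∑ A : Matrix (Fin 3) (Fin 3) F, ψ A.det =
      (q : ℂ) ^ 7 + (q : ℂ) ^ 6 - (q : ℂ) ^ 4 := by
  classical
  subst hq
  have hq1 : (Fintype.card F : ℂ) - 1 ≠ 0 :=
    sub_ne_zero.mpr (Nat.cast_ne_one.mpr Fintype.one_lt_card.ne')
  have key := Matrix.mul_sum_addChar_det (AddChar.ne_one_iff.mpr hψ) 3
  rw [Fin.prod_univ_three] at key
  refine mul_left_cancel₀ hq1 (key.trans ?_)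
  simp only [Fin.val_zero, Fin.val_one, Fin.val_two]
  ring
end

section
/- Let F be a finite field with q elements and let ψ be a nontrivial additive character of F with values in ℂ. Then Σ_{t ∈ Fˣ} Σ_{A ∈ M₃(F)} ψ(t⁻¹·det A + t) = q⁴(1 − q² − q³). -/
/-!
Left multiplication by a matrix of determinant `u` multiplies `det A` by `u`, so for a unit `u` the
sum `∑_A ψ(u · det A)` equals `S = ∑_A ψ(det A)`. Hence the inner sum at `t` is `S · ψ(t)`, and the
whole sum is `-S`. Summing `ψ(c · det A)` over all `c ∈ F` instead counts the singular matrices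
`q`-fold, which gives `(q - 1) S = (q - 1) q⁹ - q · |GL₃(F)|`; the order of `GL₃(F)` finishes.
-/

open Finset Matrix

theorem Fintype.sum_eq_zero_add_sum_units {α M : Type*} [GroupWithZero α] [Fintype α]
    [DecidableEq α] [AddCommMonoid M] (f : α → M) : ∑ x, f x = f 0 + ∑ u : αˣ, f u := by
  rw [Fintype.sum_eq_add_sum_compl 0 f, Finset.sum_subtype _ (p := (· ≠ 0)) (fun x => by simp)]
  exact congrArg _ (Fintype.sum_equiv unitsEquivNeZero.symm _ _ fun _ => rfl)

theorem Fintype.card_matrix {m n R : Type*} [Fintype m] [Fintype n] [DecidableEq m]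
    [DecidableEq n] [Fintype R] :
    Fintype.card (Matrix m n R) = Fintype.card R ^ (Fintype.card m * Fintype.card n) := by
  rw [pow_mul', ← Fintype.card_fun, ← Fintype.card_fun]
  rfl

namespace Matrix

theorem sum_comp_unit_mul_det {n R M : Type*} [Fintype n] [DecidableEq n] [Nonempty n]
    [CommRing R] [Fintype R] [AddCommMonoid M] (f : R → M) (u : Rˣ) :
    ∑ A : Matrix n n R, f (u * A.det) = ∑ A : Matrix n n R, f A.det := by
  obtain ⟨g, rfl⟩ := GeneralLinearGroup.det_surjective (n := n) u
  exact Fintype.sum_equiv (Units.mulLeft g) _ _ fun A => by simp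

theorem card_det_ne_zero_s12 {n F : Type*} [Fintype n] [DecidableEq n] [Field F] [Fintype F]
    [DecidableEq F] : #{A : Matrix n n F | A.det ≠ 0} = Nat.card (GL n F) := by
  rw [Nat.card_congr Submonoid.unitsTypeEquivIsUnitSubmonoid.toEquiv, ← Fintype.card_subtype,
    ← Nat.card_eq_fintype_card]
  exact Nat.card_congr (Equiv.subtypeEquivRight fun A => by
    rw [IsUnit.mem_submonoid_iff, isUnit_iff_isUnit_det, isUnit_iff_ne_zero])

theorem natCast_card_GL_field {F R : Type*} [Field F] [Fintype F] [CommRing R] (n : ℕ) :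
    (Nat.card (GL (Fin n) F) : R) =
      ∏ i : Fin n, ((Fintype.card F : R) ^ n - (Fintype.card F : R) ^ (i : ℕ)) := by
  rw [card_GL_field, Nat.cast_prod]
  refine prod_congr rfl fun i _ => ?_
  rw [Nat.cast_sub (Nat.pow_le_pow_right Fintype.card_pos i.is_lt.le)]
  push_cast
  rfl

end Matrix

namespace AddChar

variable {n F R : Type*} [Fintype n] [DecidableEq n] [Field F] [Fintype F] [DecidableEq F]
  [CommRing R] [IsDomain R] {ψ : AddChar F R}

theorem sum_units_eq_neg_one (hψ : ψ ≠ 1) : ∑ u : Fˣ, ψ u = -1 := by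
  rw [eq_neg_iff_add_eq_zero, add_comm, ← map_zero_eq_one ψ,
    ← Fintype.sum_eq_zero_add_sum_units, sum_eq_zero_of_ne_one hψ]

theorem sum_sum_mul_det (hψ : ψ ≠ 1) :
    ∑ c : F, ∑ A : Matrix n n F, ψ (c * A.det) =
      Fintype.card F * #{A : Matrix n n F | A.det = 0} := by
  rw [sum_comm]
  simp_rw [sum_mulShift _ (IsPrimitive.of_ne_one hψ)]
  rw [← Nat.cast_sum, sum_ite, sum_const_zero, add_zero, sum_const, smul_eq_mul, mul_comm,
    Nat.cast_mul]

theorem sub_one_mul_sum_det [Nonempty n] (hψ : ψ ≠ 1) :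
    ((Fintype.card F : R) - 1) * ∑ A : Matrix n n F, ψ A.det =
      ((Fintype.card F : R) - 1) * (Fintype.card F : R) ^ (Fintype.card n * Fintype.card n) -
        Fintype.card F * Nat.card (GL n F) := by
  have hsum := sum_sum_mul_det (n := n) hψ
  rw [Fintype.sum_eq_zero_add_sum_units] at hsum
  simp_rw [sum_comp_unit_mul_det (fun c => ψ c)] at hsum
  simp only [zero_mul, map_zero_eq_one, sum_const, card_univ, Fintype.card_units, nsmul_eq_mul,
    mul_one, Nat.cast_pred Fintype.card_pos, Fintype.card_matrix, Nat.cast_pow] at hsum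
  have hsingular : (#{A : Matrix n n F | A.det = 0} : R) + Nat.card (GL n F) =
      (Fintype.card F : R) ^ (Fintype.card n * Fintype.card n) := by
    rw [← card_det_ne_zero_s12, ← Nat.cast_add, card_filter_add_card_filter_not, card_univ,
      Fintype.card_matrix, Nat.cast_pow]
  linear_combination hsum + (Fintype.card F : R) * hsingular

end AddChar

/-- For a nontrivial additive character `ψ` of a finite field `F` with `q` elements,
`∑_{t ∈ Fˣ} ∑_{A ∈ M₃(F)} ψ(t⁻¹·det A + t) = q⁴(1 − q² − q³)`. -/
theorem stmt_12 (F : Type*) [Field F] [Fintype F] [DecidableEq F] (q : ℕ) (hq : Fintype.card F = q)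
    (ψ : AddChar F ℂ) (hψ : ∃ a : F, ψ a ≠ 1) :
    ∑ t : Fˣ, ∑ A : Matrix (Fin 3) (Fin 3) F,
        ψ (((t⁻¹ : Fˣ) : F) * A.det + (t : F)) =
      (q : ℂ) ^ 4 * (1 - (q : ℂ) ^ 2 - (q : ℂ) ^ 3) := by
  obtain ⟨a, ha⟩ := hψ
  have hψ1 : ψ ≠ 1 := fun h => ha (by simp [h])
  have hfactor : ∑ t : Fˣ, ∑ A : Matrix (Fin 3) (Fin 3) F,
      ψ (((t⁻¹ : Fˣ) : F) * A.det + (t : F)) = -∑ A : Matrix (Fin 3) (Fin 3) F, ψ A.det := by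
    simp_rw [AddChar.map_add_eq_mul, ← sum_mul, sum_comp_unit_mul_det (fun c => ψ c), ← mul_sum,
      AddChar.sum_units_eq_neg_one hψ1, mul_neg_one]
  have hdet := AddChar.sub_one_mul_sum_det (n := Fin 3) hψ1
  rw [natCast_card_GL_field, Fin.prod_univ_three, Fintype.card_fin, hq] at hdet
  have hq1 : (q : ℂ) - 1 ≠ 0 :=
    sub_ne_zero.mpr (by exact_mod_cast (hq ▸ Fintype.one_lt_card (α := F)).ne')
  rw [hfactor]
  apply mul_left_cancel₀ hq1
  simp only [Fin.val_zero, Fin.val_one, Fin.val_two] at hdet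
  linear_combination -hdet
end
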